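/- Let R be an integral domain and f ∈ R nonzero non-invertible. The image of u is a prime element of S = R[u,v]/(uv - f) if and only if f is a prime element of R. -/

import Mathlib

/-!
Killing `u` in `S` also kills `f = uv`, so `S ⧸ (u) ≅ (R ⧸ (f))[v]`. Hence `u` is prime iff
`(R ⧸ (f))[v]` is a domain, iff `R ⧸ (f)` is a domain, iff `f` is prime. The element `u` is never
zero, as evaluating at `u = 1, v = f` shows.
-/

open MvPolynomial

/-- The suspension ring `S = R[u,v]/(uv - f)`. -/
abbrev Susp (R : Type*) [CommRing R] (f : R) : Type _ :=
  MvPolynomial (Fin 2) R ⧸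
    Ideal.span {(X 0 * X 1 - C f : MvPolynomial (Fin 2) R)}

/-- The image of the variable `u` in `S`. -/
noncomputable abbrev suspU (R : Type*) [CommRing R] (f : R) : Susp R f :=
  Ideal.Quotient.mk _ (X 0)

/-- The image of the variable `v` in `S`. -/
noncomputable abbrev suspV (R : Type*) [CommRing R] (f : R) : Susp R f :=
  Ideal.Quotient.mk _ (X 1)

section

variable {R : Type*} [CommRing R] {f : R}

theorem suspU_ne_zero [Nontrivial R] : suspU R f ≠ 0 := by
  intro h
  let ev : Susp R f →+* R := Ideal.Quotient.lift _ (eval ![1, f]) (by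
    intro a ha
    obtain ⟨b, rfl⟩ := Ideal.mem_span_singleton'.1 ha
    simp)
  simpa [ev] using congrArg ev h

theorem mk_C_mem_span_suspU : Ideal.Quotient.mk _ (C f) ∈ Ideal.span {suspU R f} := by
  have huv : Ideal.Quotient.mk _ (C f) = suspU R f * suspV R f :=
    (Ideal.Quotient.mk_eq_mk_iff_sub_mem _ _).2 <| by
      rw [← neg_mem_iff, neg_sub]
      exact Ideal.mem_span_singleton_self _
  exact Ideal.mem_span_singleton.2 ⟨suspV R f, huv⟩

variable (R f)

noncomputable def quotientSpanSuspUToPolynomial :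
    Susp R f ⧸ Ideal.span {suspU R f} →+* Polynomial (R ⧸ Ideal.span {f}) :=
  Ideal.Quotient.lift _
    (Ideal.Quotient.lift _
      (eval₂Hom (Polynomial.C.comp (Ideal.Quotient.mk _)) ![0, Polynomial.X]) (by
        intro a ha
        obtain ⟨b, rfl⟩ := Ideal.mem_span_singleton'.1 ha
        simp))
    (by
      intro a ha
      obtain ⟨b, rfl⟩ := Ideal.mem_span_singleton'.1 ha
      simp)

noncomputable def polynomialToQuotientSpanSuspU :
    Polynomial (R ⧸ Ideal.span {f}) →+* Susp R f ⧸ Ideal.span {suspU R f} :=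
  Polynomial.eval₂RingHom
    (Ideal.Quotient.lift _ (((Ideal.Quotient.mk _).comp (Ideal.Quotient.mk _)).comp C) (by
      intro a ha
      obtain ⟨b, rfl⟩ := Ideal.mem_span_singleton'.1 ha
      rw [RingHom.comp_apply, RingHom.comp_apply, Ideal.Quotient.eq_zero_iff_mem, map_mul,
        map_mul]
      exact Ideal.mul_mem_left _ _ mk_C_mem_span_suspU))
    (Ideal.Quotient.mk _ (suspV R f))

noncomputable def quotientSpanSuspUEquiv :
    Susp R f ⧸ Ideal.span {suspU R f} ≃+* Polynomial (R ⧸ Ideal.span {f}) :=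
  RingEquiv.ofRingHom (quotientSpanSuspUToPolynomial R f) (polynomialToQuotientSpanSuspU R f)
    (by
      apply Polynomial.ringHom_ext'
      · apply Ideal.Quotient.ringHom_ext
        ext r
        simp [quotientSpanSuspUToPolynomial, polynomialToQuotientSpanSuspU]
      · simp [quotientSpanSuspUToPolynomial, polynomialToQuotientSpanSuspU])
    (by
      apply Ideal.Quotient.ringHom_ext
      apply Ideal.Quotient.ringHom_ext
      apply MvPolynomial.ringHom_ext
      · intro r
        simp [quotientSpanSuspUToPolynomial, polynomialToQuotientSpanSuspU]
      · intro i
        fin_cases i <;> simp [quotientSpanSuspUToPolynomial, polynomialToQuotientSpanSuspU])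

end

theorem suspU_prime_iff_general (R : Type*) [CommRing R] [IsDomain R] (f : R)
    (hf0 : f ≠ 0) :
    Prime (suspU R f) ↔ Prime f := by
  rw [← Ideal.span_singleton_prime suspU_ne_zero, ← Ideal.span_singleton_prime hf0,
    ← Ideal.Quotient.isDomain_iff_prime, ← Ideal.Quotient.isDomain_iff_prime,
    (quotientSpanSuspUEquiv R f).toMulEquiv.isDomain_iff, Polynomial.isDomain_iff,
    and_iff_left (inferInstanceAs (IsCancelAdd (R ⧸ Ideal.span {f})))]

/-- The image of `u` is a prime element of `S = R[u,v]/(uv - f)` if and only if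
`f` is a prime element of `R`. -/
theorem suspU_prime_iff (R : Type*) [CommRing R] [IsDomain R] (f : R)
    (hf0 : f ≠ 0) (hf : ¬ IsUnit f) :
    Prime (suspU R f) ↔ Prime f :=
  suspU_prime_iff_general R f hf0
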